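/- arXiv:1610.02295 — 4 statements merged into one kernel-verified Lean document; each statement's English description precedes it below -/
import Mathlib

section
/- Let Φ: X₁ → X₂ be an injective morphism of measure spaces between (X₁, 𝒜₁, μ₁) and (X₂, 𝒜₂, μ₂) (with measurable images of measurable sets). Let λ₁, λ₂ be complex (signed, finite) measures on X₁, X₂ respectively, with Lebesgue decompositions λ₁ = λ₁ₐ + λ₁ₛ relative to μ₁ and λ₂ = λ₂ₐ + λ₂ₛ relative to μ₂. If Φ∗λ₁ = λ₂, then Φ∗λ₁ₐ = λ₂ₐ and Φ∗λ₁ₛ = λ₂ₛ. -/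
/-!
Push both pieces of the decomposition of `λ₁` forward. Since `Φ∗μ₁ = μ₂`, the image `Φ∗λ₁ₐ` is
still absolutely continuous with respect to `μ₂`; since `Φ` is injective and maps measurable sets to
measurable sets, `Φ∗λ₁ₛ` lives on `Φ(W₁)`, whose preimage is the `μ₁`-null carrier `W₁`, so it stays
singular. Hence `Φ∗λ₁ₐ + Φ∗λ₁ₛ` is a second Lebesgue decomposition of `λ₂`, and the decomposition
is unique: the difference of the two absolutely continuous parts is both absolutely continuous and
singular, hence zero.
-/

namespace MeasureTheory

variable {α β : Type*} [MeasurableSpace α] [MeasurableSpace β]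

theorem Measure.toENNRealVectorMeasure_map (μ : Measure α) {f : α → β} (hf : Measurable f) :
    (μ.map f).toENNRealVectorMeasure = μ.toENNRealVectorMeasure.map f :=
  VectorMeasure.ext fun s hs => by
    rw [VectorMeasure.map_apply _ hf hs, toENNRealVectorMeasure_apply_measurable hs,
      toENNRealVectorMeasure_apply_measurable (hf hs), Measure.map_apply hf hs]

namespace VectorMeasure

section AddCommMonoid

variable {M N : Type*} [AddCommMonoid M] [TopologicalSpace M] [AddCommMonoid N]
  [TopologicalSpace N] {v : VectorMeasure α M} {μ : Measure α}

theorem absolutelyContinuous_toENNRealVectorMeasure_of_null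
    (h : ∀ E, MeasurableSet E → μ E = 0 → v E = 0) : v ≪ᵥ μ.toENNRealVectorMeasure :=
  AbsolutelyContinuous.mk fun E hE hE0 =>
    h E hE (by rwa [Measure.toENNRealVectorMeasure_apply_measurable hE] at hE0)

theorem mutuallySingular_toENNRealVectorMeasure_of_concentrated {V W : Set α}
    (hV : MeasurableSet V) (hVW : Disjoint V W) (hμ : ∀ Z, MeasurableSet Z → μ Z = μ (Z ∩ V))
    (hv : ∀ Z, MeasurableSet Z → v Z = v (Z ∩ W)) : v ⟂ᵥ μ.toENNRealVectorMeasure := by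
  refine MutuallySingular.mk V hV (fun t ht htm => ?_) fun t ht htm => ?_
  · rw [hv t htm, (hVW.mono_left ht).inter_eq, v.empty]
  · rw [Measure.toENNRealVectorMeasure_apply_measurable htm, hμ t htm,
      (Set.disjoint_of_subset_left ht disjoint_compl_left).inter_eq, measure_empty]

theorem AbsolutelyContinuous.map_measure (h : v ≪ᵥ μ.toENNRealVectorMeasure) {f : α → β}
    (hf : Measurable f) : v.map f ≪ᵥ (μ.map f).toENNRealVectorMeasure := by
  rw [μ.toENNRealVectorMeasure_map hf]
  refine AbsolutelyContinuous.mk fun s hs hs0 => ?_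
  rw [map_apply _ hf hs] at hs0 ⊢
  exact h hs0

theorem MutuallySingular.map_measure (h : v ⟂ᵥ μ.toENNRealVectorMeasure) {f : α → β}
    (hf : MeasurableEmbedding f) : v.map f ⟂ᵥ (μ.map f).toENNRealVectorMeasure := by
  rw [μ.toENNRealVectorMeasure_map hf.measurable]
  obtain ⟨S, hS, hvS, hμS⟩ := h
  refine MutuallySingular.mk (f '' S) (hf.measurableSet_image' hS) (fun t ht htm => ?_)
    fun t ht htm => ?_
  · rw [map_apply _ hf.measurable htm]
    exact hvS _ ((Set.preimage_mono ht).trans (hf.injective.preimage_image S).subset)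
  · rw [map_apply _ hf.measurable htm]
    exact hμS _ fun x hx hxS => ht hx ⟨x, hxS, rfl⟩

theorem eq_zero_of_absolutelyContinuous_of_mutuallySingular [T2Space M] {w : VectorMeasure α N}
    (hac : v ≪ᵥ w) (hsing : v ⟂ᵥ w) : v = 0 := by
  obtain ⟨S, hS, hvS, hwS⟩ := hsing
  refine ext fun t ht => ?_
  have hdiff : t \ (t ∩ S) ⊆ Sᶜ := fun x hx hxS => hx.2 ⟨hx.1, hxS⟩
  rw [← of_add_of_sdiff (ht.inter hS) ht Set.inter_subset_left, hvS _ Set.inter_subset_right,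
    hac (hwS _ hdiff), add_zero, zero_apply]

end AddCommMonoid

section AddCommGroup

variable {M N : Type*} [AddCommGroup M] [TopologicalSpace M] [IsTopologicalAddGroup M]
  [T2Space M] [AddCommMonoid N] [TopologicalSpace N] [T2Space N] {w : VectorMeasure α N}

theorem eq_and_eq_of_add_eq_add_of_absolutelyContinuous_of_mutuallySingular
    {a₁ a₂ s₁ s₂ : VectorMeasure α M} (h : a₁ + s₁ = a₂ + s₂) (ha₁ : a₁ ≪ᵥ w) (ha₂ : a₂ ≪ᵥ w)
    (hs₁ : s₁ ⟂ᵥ w) (hs₂ : s₂ ⟂ᵥ w) : a₁ = a₂ ∧ s₁ = s₂ := by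
  have hdiff : a₁ - a₂ = s₂ - s₁ := by rw [sub_eq_sub_iff_add_eq_add, h, add_comm]
  have hsing : s₂ - s₁ ⟂ᵥ w := by
    rw [sub_eq_add_neg]
    exact hs₂.add_left hs₁.neg_left
  have ha : a₁ = a₂ := sub_eq_zero.mp <|
    eq_zero_of_absolutelyContinuous_of_mutuallySingular (ha₁.sub ha₂) (hdiff ▸ hsing)
  exact ⟨ha, add_left_cancel (ha ▸ h)⟩

end AddCommGroup

end VectorMeasure

end MeasureTheory

open MeasureTheory VectorMeasure

theorem stmt4_general {X₁ X₂ : Type*} [MeasurableSpace X₁] [MeasurableSpace X₂]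
    (μ₁ : Measure X₁) (μ₂ : Measure X₂)
    (Φ : X₁ → X₂) (hΦ : Measurable Φ) (hinj : Function.Injective Φ)
    (himg : ∀ A : Set X₁, MeasurableSet A → MeasurableSet (Φ '' A))
    (hmor : μ₁.map Φ = μ₂)
    (lam₁ lam₁a lam₁s : SignedMeasure X₁) (lam₂ lam₂a lam₂s : SignedMeasure X₂)
    (hdec₁ : lam₁ = lam₁a + lam₁s)
    (hac₁ : ∀ E : Set X₁, MeasurableSet E → μ₁ E = 0 → lam₁a E = 0)
    (hsing₁ : ∃ V W : Set X₁, MeasurableSet V ∧ MeasurableSet W ∧ Disjoint V W ∧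
      (∀ Z : Set X₁, MeasurableSet Z → μ₁ Z = μ₁ (Z ∩ V)) ∧
      (∀ Z : Set X₁, MeasurableSet Z → lam₁s Z = lam₁s (Z ∩ W)))
    (hdec₂ : lam₂ = lam₂a + lam₂s)
    (hac₂ : ∀ E : Set X₂, MeasurableSet E → μ₂ E = 0 → lam₂a E = 0)
    (hsing₂ : ∃ V W : Set X₂, MeasurableSet V ∧ MeasurableSet W ∧ Disjoint V W ∧
      (∀ Z : Set X₂, MeasurableSet Z → μ₂ Z = μ₂ (Z ∩ V)) ∧
      (∀ Z : Set X₂, MeasurableSet Z → lam₂s Z = lam₂s (Z ∩ W)))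
    (hpush : lam₁.map Φ = lam₂) :
    lam₁a.map Φ = lam₂a ∧ lam₁s.map Φ = lam₂s := by
  obtain ⟨V₁, W₁, hV₁, -, hVW₁, hμ₁, hW₁⟩ := hsing₁
  obtain ⟨V₂, W₂, hV₂, -, hVW₂, hμ₂, hW₂⟩ := hsing₂
  subst hmor
  have hΦ' : MeasurableEmbedding Φ := ⟨hinj, hΦ, himg⟩
  refine eq_and_eq_of_add_eq_add_of_absolutelyContinuous_of_mutuallySingular ?_
    ((absolutelyContinuous_toENNRealVectorMeasure_of_null hac₁).map_measure hΦ)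
    (absolutelyContinuous_toENNRealVectorMeasure_of_null hac₂)
    ((mutuallySingular_toENNRealVectorMeasure_of_concentrated hV₁ hVW₁ hμ₁ hW₁).map_measure hΦ')
    (mutuallySingular_toENNRealVectorMeasure_of_concentrated hV₂ hVW₂ hμ₂ hW₂)
  rw [← VectorMeasure.map_add, ← hdec₁, hpush, hdec₂]

/-- Stability of the Lebesgue decomposition under an injective morphism of measure spaces
(mapping measurable sets to measurable sets): if `Φ∗λ₁ = λ₂`, where `λ₁ = λ₁ₐ + λ₁ₛ` and
`λ₂ = λ₂ₐ + λ₂ₛ` are the Lebesgue decompositions of the signed (finite) measures `λ₁`, `λ₂`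
relative to the σ-finite measures `μ₁`, `μ₂` respectively, then `Φ∗λ₁ₐ = λ₂ₐ` and
`Φ∗λ₁ₛ = λ₂ₛ`. -/
theorem stmt4 {X₁ X₂ : Type*} [MeasurableSpace X₁] [MeasurableSpace X₂]
    (μ₁ : Measure X₁) (μ₂ : Measure X₂) [SigmaFinite μ₁] [SigmaFinite μ₂]
    (Φ : X₁ → X₂) (hΦ : Measurable Φ) (hinj : Function.Injective Φ)
    (himg : ∀ A : Set X₁, MeasurableSet A → MeasurableSet (Φ '' A))
    (hmor : μ₁.map Φ = μ₂)
    (lam₁ lam₁a lam₁s : SignedMeasure X₁) (lam₂ lam₂a lam₂s : SignedMeasure X₂)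
    (hdec₁ : lam₁ = lam₁a + lam₁s)
    (hac₁ : ∀ E : Set X₁, MeasurableSet E → μ₁ E = 0 → lam₁a E = 0)
    (hsing₁ : ∃ V W : Set X₁, MeasurableSet V ∧ MeasurableSet W ∧ Disjoint V W ∧
      (∀ Z : Set X₁, MeasurableSet Z → μ₁ Z = μ₁ (Z ∩ V)) ∧
      (∀ Z : Set X₁, MeasurableSet Z → lam₁s Z = lam₁s (Z ∩ W)))
    (hdec₂ : lam₂ = lam₂a + lam₂s)
    (hac₂ : ∀ E : Set X₂, MeasurableSet E → μ₂ E = 0 → lam₂a E = 0)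
    (hsing₂ : ∃ V W : Set X₂, MeasurableSet V ∧ MeasurableSet W ∧ Disjoint V W ∧
      (∀ Z : Set X₂, MeasurableSet Z → μ₂ Z = μ₂ (Z ∩ V)) ∧
      (∀ Z : Set X₂, MeasurableSet Z → lam₂s Z = lam₂s (Z ∩ W)))
    (hpush : lam₁.map Φ = lam₂) :
    lam₁a.map Φ = lam₂a ∧ lam₁s.map Φ = lam₂s :=
  stmt4_general μ₁ μ₂ Φ hΦ hinj himg hmor lam₁ lam₁a lam₁s lam₂ lam₂a lam₂s hdec₁ hac₁ hsing₁ hdec₂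
    hac₂ hsing₂ hpush
end

section
/- For n ≥ 1, let T: ℝⁿ × ℝ → ℝ^{n+1} be defined by T((x₁,…,xₙ), t) = (eᵗx₁, …, eᵗxₙ, eᵗ(1 − Σᵢ xᵢ)). Then T is a C^∞ map (indeed a diffeomorphism onto its image U_{n+1} = {y ∈ ℝ^{n+1} : Σ yᵢ > 0}) and its Jacobian determinant at ((x₁,…,xₙ), t) equals e^{(n+1)t}. -/
open scoped BigOperators


theorem stmt8_sum_last (n : ℕ) (f : Fin (n+1) → ℝ) :
    ∑ j : Fin (n+1), (if (j : ℕ) < n then 0 else f j) = f (Fin.last n) := by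
  rw [Fin.sum_univ_castSucc]; simp [Fin.is_lt]

theorem stmt8_sum_cast (n : ℕ) (f : Fin (n+1) → ℝ) :
    ∑ j : Fin (n+1), (if (j : ℕ) < n then f j else 0) = ∑ k : Fin n, f (Fin.castSucc k) := by
  rw [Fin.sum_univ_castSucc]; simp [Fin.is_lt]

theorem stmt8_eq_last (n : ℕ) (i : Fin (n+1)) (hi : ¬ (i : ℕ) < n) : i = Fin.last n := by
  have h1 := i.is_lt
  exact Fin.ext (by simp only [Fin.val_last]; omega)

noncomputable def stmt8B (n : ℕ) (z : Fin (n+1) → ℝ) : Matrix (Fin (n+1)) (Fin (n+1)) ℝ :=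
  fun i j =>
    if (i : ℕ) < n then (if i = j then 1 else 0) + (if (j : ℕ) < n then 0 else z i)
    else (if (j : ℕ) < n then -1 else 1 - ∑ k : Fin n, z (Fin.castSucc k))

noncomputable def stmt8L (n : ℕ) : Matrix (Fin (n+1)) (Fin (n+1)) ℝ :=
  fun i j => if (i : ℕ) < n then (if i = j then 1 else 0) else (if (j : ℕ) < n then -1 else 1)

noncomputable def stmt8U (n : ℕ) (z : Fin (n+1) → ℝ) : Matrix (Fin (n+1)) (Fin (n+1)) ℝ :=
  fun i j => if i = j then 1 else if (i : ℕ) < n ∧ ¬ (j : ℕ) < n then z i else 0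

theorem stmt8B_eq (n : ℕ) (z : Fin (n+1) → ℝ) : stmt8B n z = stmt8L n * stmt8U n z := by
  ext i j
  rw [Matrix.mul_apply]
  by_cases hi : (i : ℕ) < n
  · have : ∀ k : Fin (n+1), stmt8L n i k * stmt8U n z k j
        = if i = k then stmt8U n z k j else 0 := by
      intro k; simp [stmt8L, hi, ite_mul]
    rw [Finset.sum_congr rfl fun k _ => this k, Finset.sum_ite_eq]
    by_cases hij : i = j
    · subst hij
      simp [stmt8B, stmt8U, hi]
    · by_cases hj : (j : ℕ) < n <;> simp [stmt8B, stmt8U, hi, hij, hj]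
  · have : ∀ k : Fin (n+1), stmt8L n i k * stmt8U n z k j
        = if (k : ℕ) < n then -(stmt8U n z k j) else stmt8U n z k j := by
      intro k; by_cases hk : (k : ℕ) < n <;> simp [stmt8L, hi, hk]
    rw [Finset.sum_congr rfl fun k _ => this k]
    have hil : i = Fin.last n := stmt8_eq_last n i hi
    subst hil
    by_cases hj : (j : ℕ) < n
    · have : ∀ k : Fin (n+1), (if (k : ℕ) < n then -(stmt8U n z k j) else stmt8U n z k j)
          = (if (k : ℕ) < n then (if k = j then (-1:ℝ) else 0) else 0) := by
        intro k
        by_cases hk : (k : ℕ) < n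
        · by_cases hkj : k = j <;> simp [stmt8U, hk, hkj, hj]
        · have hkl : k = Fin.last n := stmt8_eq_last n k hk
          subst hkl
          have hne : ¬ Fin.last n = j := by
            intro h; rw [← h] at hj; simp at hj
          simp [stmt8U, hk, hne, hj]
      rw [Finset.sum_congr rfl fun k _ => this k, stmt8_sum_cast]
      rw [Finset.sum_eq_single ⟨(j:ℕ), hj⟩]
      · have hjc : Fin.castSucc ⟨(j:ℕ), hj⟩ = j := Fin.ext rfl
        simp [stmt8B, hj, hjc]
      · intro k _ hk
        have : ¬ Fin.castSucc k = j := by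
          intro h; apply hk; apply Fin.ext; simpa using congrArg Fin.val h
        simp [this]
      · simp
    · have hjl : j = Fin.last n := stmt8_eq_last n j hj
      subst hjl
      have : ∀ k : Fin (n+1), (if (k : ℕ) < n then -(stmt8U n z k (Fin.last n)) else stmt8U n z k (Fin.last n))
          = (if (k : ℕ) < n then -(z k) else 1) := by
        intro k
        by_cases hk : (k : ℕ) < n
        · have : ¬ k = Fin.last n := by
            intro h; subst h; simp at hk
          simp [stmt8U, hk, this]
        · have := stmt8_eq_last n k hk
          subst this; simp [stmt8U]
      rw [Finset.sum_congr rfl fun k _ => this k]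
      rw [Fin.sum_univ_castSucc]
      simp [stmt8B, hj, Fin.is_lt]
      ring

theorem stmt8B_det (n : ℕ) (z : Fin (n+1) → ℝ) : (stmt8B n z).det = 1 := by
  rw [stmt8B_eq, Matrix.det_mul]
  have hL : (stmt8L n).det = 1 := by
    rw [Matrix.det_of_lowerTriangular]
    · apply Finset.prod_eq_one
      intro i _
      by_cases hi : (i : ℕ) < n <;> simp [stmt8L, hi]
    · intro i j hij
      have hij' : (i : ℕ) < (j : ℕ) := hij
      have hjn := j.is_lt
      have hi : (i : ℕ) < n := by omega
      have hne : ¬ i = j := by intro h; subst h; omega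
      simp [stmt8L, hi, hne]
  have hU : (stmt8U n z).det = 1 := by
    rw [Matrix.det_of_upperTriangular]
    · apply Finset.prod_eq_one
      intro i _; simp [stmt8U]
    · intro i j hij
      have hij' : (j : ℕ) < (i : ℕ) := hij
      have h1 : ¬ i = j := by intro h; subst h; omega
      have h2 : ¬ ((i:ℕ) < n ∧ ¬ (j:ℕ) < n) := by
        rintro ⟨ha, hb⟩; omega
      simp only [stmt8U, if_neg h1, if_neg h2]
  rw [hL, hU]; ring

noncomputable def stmt8D (n : ℕ) (z : Fin (n+1) → ℝ) : (Fin (n+1) → ℝ) →L[ℝ] (Fin (n+1) → ℝ) :=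
  LinearMap.toContinuousLinearMap (Matrix.toLin' (Real.exp (z (Fin.last n)) • stmt8B n z))

theorem stmt8D_apply (n : ℕ) (z v : Fin (n+1) → ℝ) (i : Fin (n+1)) :
    stmt8D n z v i = ∑ j, Real.exp (z (Fin.last n)) * stmt8B n z i j * v j := by
  simp [stmt8D, Matrix.toLin'_apply, Matrix.mulVec, dotProduct, Matrix.smul_apply,
    smul_eq_mul, Finset.mul_sum, mul_assoc]

theorem stmt8_hasFDeriv (n : ℕ) (T : (Fin (n+1) → ℝ) → (Fin (n+1) → ℝ))
    (hT' : ∀ z : Fin (n+1) → ℝ, ∀ i : Fin (n+1),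
      T z i = if (i : ℕ) < n
        then Real.exp (z (Fin.last n)) * z i
        else Real.exp (z (Fin.last n)) * (1 - ∑ j : Fin n, z (Fin.castSucc j)))
    (z : Fin (n+1) → ℝ) : HasFDerivAt T (stmt8D n z) z := by
  set t := z (Fin.last n) with ht
  rw [hasFDerivAt_pi']
  intro i
  have hexp : HasFDerivAt (fun w : Fin (n+1) → ℝ => Real.exp (w (Fin.last n)))
      (Real.exp t • (ContinuousLinearMap.proj (Fin.last n) :
        (Fin (n+1) → ℝ) →L[ℝ] ℝ)) z :=
    by have := (Real.hasDerivAt_exp t).comp_hasFDerivAt z (hasFDerivAt_apply (𝕜 := ℝ) (Fin.last n) z); exact this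
  by_cases hi : (i : ℕ) < n
  · have hfun : (fun w => T w i) = fun w : Fin (n+1) → ℝ => Real.exp (w (Fin.last n)) * w i := by
      funext w; rw [hT' w i, if_pos hi]
    rw [hfun]
    have hmul : HasFDerivAt (fun w : Fin (n+1) → ℝ => Real.exp (w (Fin.last n)) * w i)
        (Real.exp (z (Fin.last n)) • (ContinuousLinearMap.proj i : (Fin (n+1) → ℝ) →L[ℝ] ℝ)
          + z i • Real.exp t • (ContinuousLinearMap.proj (Fin.last n) : (Fin (n+1) → ℝ) →L[ℝ] ℝ)) z :=
      hexp.mul (hasFDerivAt_apply i z)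
    refine hmul.congr_fderiv ?_
    symm
    ext v
    simp only [ContinuousLinearMap.coe_comp', Function.comp_apply, ContinuousLinearMap.add_apply,
      ContinuousLinearMap.smul_apply, ContinuousLinearMap.proj_apply, smul_eq_mul]
    rw [stmt8D_apply]
    have : ∀ j : Fin (n+1), Real.exp t * stmt8B n z i j * v j
        = (if i = j then Real.exp t * v j else 0)
          + (if (j : ℕ) < n then 0 else Real.exp t * z i * v j) := by
      intro j
      by_cases hij : i = j
      · subst hij
        simp [stmt8B, hi]
        try ring
      · by_cases hj : (j : ℕ) < n <;> simp [stmt8B, hi, hij, hj]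
    rw [Finset.sum_congr rfl fun j _ => this j, Finset.sum_add_distrib,
      Finset.sum_ite_eq, stmt8_sum_last]
    simp
    ring
  · have hfun : (fun w => T w i)
        = fun w : Fin (n+1) → ℝ => Real.exp (w (Fin.last n)) * (1 - ∑ j : Fin n, w (Fin.castSucc j)) := by
      funext w; rw [hT' w i, if_neg hi]
    rw [hfun]
    have hsum : HasFDerivAt (fun w : Fin (n+1) → ℝ => ∑ j : Fin n, w (Fin.castSucc j))
        (∑ j : Fin n, (ContinuousLinearMap.proj (Fin.castSucc j) :
          (Fin (n+1) → ℝ) →L[ℝ] ℝ)) z :=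
      HasFDerivAt.fun_sum fun j _ => hasFDerivAt_apply (Fin.castSucc j) z
    have hd : HasFDerivAt (fun w : Fin (n+1) → ℝ => 1 - ∑ j : Fin n, w (Fin.castSucc j))
        (0 - ∑ j : Fin n, (ContinuousLinearMap.proj (Fin.castSucc j) :
          (Fin (n+1) → ℝ) →L[ℝ] ℝ)) z :=
      (hasFDerivAt_const 1 z).sub hsum
    have hmul : HasFDerivAt (fun w : Fin (n+1) → ℝ => Real.exp (w (Fin.last n)) * (1 - ∑ j : Fin n, w (Fin.castSucc j)))
        (Real.exp (z (Fin.last n)) • (0 - ∑ j : Fin n, (ContinuousLinearMap.proj (Fin.castSucc j) :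
            (Fin (n+1) → ℝ) →L[ℝ] ℝ))
          + (1 - ∑ j : Fin n, z (Fin.castSucc j)) • Real.exp t • (ContinuousLinearMap.proj (Fin.last n) : (Fin (n+1) → ℝ) →L[ℝ] ℝ)) z :=
      hexp.mul hd
    refine hmul.congr_fderiv ?_
    symm
    ext v
    simp only [ContinuousLinearMap.coe_comp', Function.comp_apply, ContinuousLinearMap.add_apply,
      ContinuousLinearMap.smul_apply, ContinuousLinearMap.proj_apply, smul_eq_mul,
      ContinuousLinearMap.coe_sub', Pi.sub_apply, ContinuousLinearMap.zero_apply,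
      ContinuousLinearMap.coe_sum', Finset.sum_apply]
    rw [stmt8D_apply]
    have : ∀ j : Fin (n+1), Real.exp t * stmt8B n z i j * v j
        = (if (j : ℕ) < n then -(Real.exp t * v j) else
            Real.exp t * (1 - ∑ k : Fin n, z (Fin.castSucc k)) * v j) := by
      intro j
      by_cases hj : (j : ℕ) < n
      · simp [stmt8B, hi, hj]; try ring
      · simp [stmt8B, hi, hj]; try ring
    rw [Finset.sum_congr rfl fun j _ => this j]
    have split : ∀ j : Fin (n+1),
        (if (j : ℕ) < n then -(Real.exp t * v j) else
            Real.exp t * (1 - ∑ k : Fin n, z (Fin.castSucc k)) * v j)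
        = (if (j : ℕ) < n then -(Real.exp t * v j) else 0)
          + (if (j : ℕ) < n then 0 else Real.exp t * (1 - ∑ k : Fin n, z (Fin.castSucc k)) * v j) := by
      intro j; by_cases hj : (j : ℕ) < n <;> simp [hj]
    rw [Finset.sum_congr rfl fun j _ => split j, Finset.sum_add_distrib, stmt8_sum_last]
    have : ∑ j : Fin (n+1), (if (j : ℕ) < n then -(Real.exp t * v j) else 0)
        = ∑ k : Fin n, -(Real.exp t * v (Fin.castSucc k)) :=
      stmt8_sum_cast n _
    rw [this, Finset.sum_neg_distrib, ← Finset.mul_sum]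
    ring


theorem stmt8_main (n : ℕ) (_hn : 1 ≤ n)
    (T : (Fin (n+1) → ℝ) → (Fin (n+1) → ℝ))
    (hT' : ∀ z : Fin (n+1) → ℝ, ∀ i : Fin (n+1),
      T z i = if (i : ℕ) < n
        then Real.exp (z (Fin.last n)) * z i
        else Real.exp (z (Fin.last n)) * (1 - ∑ j : Fin n, z (Fin.castSucc j))) :
    ContDiff ℝ (⊤ : ℕ∞) T ∧ Function.Injective T ∧
      Set.range T = {y : Fin (n+1) → ℝ | 0 < ∑ i, y i} := by
  have hlast : ¬ ((Fin.last n : Fin (n+1)) : ℕ) < n := by simp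
  have hsum : ∀ z : Fin (n+1) → ℝ, ∑ i, T z i = Real.exp (z (Fin.last n)) := by
    intro z
    rw [Fin.sum_univ_castSucc]
    have h1 : ∀ k : Fin n, T z (Fin.castSucc k) = Real.exp (z (Fin.last n)) * z (Fin.castSucc k) := by
      intro k; rw [hT', if_pos]; simp [Fin.is_lt]
    rw [Finset.sum_congr rfl fun k _ => h1 k, hT', if_neg hlast, ← Finset.mul_sum]
    ring
  refine ⟨?_, ?_, ?_⟩
  · rw [contDiff_pi]
    intro i
    have hexp : ContDiff ℝ (⊤ : ℕ∞) (fun w : Fin (n+1) → ℝ => Real.exp (w (Fin.last n))) :=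
      Real.contDiff_exp.comp (contDiff_apply ℝ ℝ (Fin.last n))
    by_cases hi : (i : ℕ) < n
    · have : (fun z => T z i) = fun z : Fin (n+1) → ℝ => Real.exp (z (Fin.last n)) * z i := by
        funext z; rw [hT', if_pos hi]
      rw [this]
      exact hexp.mul (contDiff_apply ℝ ℝ i)
    · have : (fun z => T z i) = fun z : Fin (n+1) → ℝ =>
          Real.exp (z (Fin.last n)) * (1 - ∑ j : Fin n, z (Fin.castSucc j)) := by
        funext z; rw [hT', if_neg hi]
      rw [this]
      exact hexp.mul (contDiff_const.sub
        (ContDiff.sum fun j _ => contDiff_apply ℝ ℝ (Fin.castSucc j)))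
  · intro a b hab
    have hte : Real.exp (a (Fin.last n)) = Real.exp (b (Fin.last n)) := by
      rw [← hsum a, ← hsum b, hab]
    have htl : a (Fin.last n) = b (Fin.last n) := Real.exp_injective hte
    funext i
    by_cases hi : (i : ℕ) < n
    · have := congrFun hab i
      rw [hT' a i, hT' b i, if_pos hi, if_pos hi, hte] at this
      exact mul_left_cancel₀ (Real.exp_ne_zero _) this
    · have : i = Fin.last n := by
        have := i.is_lt; exact Fin.ext (by simp only [Fin.val_last]; omega)
      rw [this]; exact htl
  · ext y
    simp only [Set.mem_range, Set.mem_setOf_eq]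
    constructor
    · rintro ⟨z, rfl⟩
      rw [hsum]
      exact Real.exp_pos _
    · intro hy
      set s := ∑ i, y i with hs
      refine ⟨fun i => if (i : ℕ) < n then y i / s else Real.log s, ?_⟩
      funext i
      have hzl : (if ((Fin.last n : Fin (n+1)) : ℕ) < n then y (Fin.last n) / s else Real.log s)
          = Real.log s := if_neg hlast
      rw [hT']
      by_cases hi : (i : ℕ) < n
      · rw [if_pos hi, hzl, Real.exp_log hy, if_pos hi]
        field_simp
      · rw [if_neg hi, hzl, Real.exp_log hy]
        have hil : i = Fin.last n := by
          have := i.is_lt; exact Fin.ext (by simp only [Fin.val_last]; omega)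
        subst hil
        have h2 : ∀ j : Fin n,
            (if ((Fin.castSucc j : Fin (n+1)) : ℕ) < n then y (Fin.castSucc j) / s else Real.log s)
              = y (Fin.castSucc j) / s := by
          intro j; rw [if_pos]; simp [Fin.is_lt]
        rw [Finset.sum_congr rfl fun j _ => h2 j]
        have hsplit : s = ∑ k : Fin n, y (Fin.castSucc k) + y (Fin.last n) := by
          rw [hs, Fin.sum_univ_castSucc]
        have hsne : s ≠ 0 := ne_of_gt hy
        have key : s * (1 - (∑ k : Fin n, y (Fin.castSucc k)) / s)
            = s - ∑ k : Fin n, y (Fin.castSucc k) := by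
          field_simp
        rw [← Finset.sum_div, key]
        linarith [hsplit]


/-- The trivialising map `T((x₁,…,xₙ), t) = (eᵗx₁, …, eᵗxₙ, eᵗ(1 − Σᵢ xᵢ))`, viewed as a
self-map of `ℝ^{n+1}` (the last input coordinate playing the role of `t`), is `C^∞`,
injective with range the half-space `U_{n+1} = {y : Σ yᵢ > 0}` (hence a diffeomorphism
onto its image), and its Jacobian determinant at `((x₁,…,xₙ), t)` equals `e^{(n+1)t}`. -/
theorem stmt8 (n : ℕ) (hn : 1 ≤ n)
    (T : (Fin (n+1) → ℝ) → (Fin (n+1) → ℝ))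
    (hT : ∀ z : Fin (n+1) → ℝ, ∀ i : Fin (n+1),
      T z i = if h : (i : ℕ) < n
        then Real.exp (z (Fin.last n)) * z ⟨i, Nat.lt_succ_of_lt h⟩
        else Real.exp (z (Fin.last n)) * (1 - ∑ j : Fin n, z (Fin.castSucc j))) :
    ContDiff ℝ (⊤ : ℕ∞) T ∧ Function.Injective T ∧
      Set.range T = {y : Fin (n+1) → ℝ | 0 < ∑ i, y i} ∧
      ∀ z : Fin (n+1) → ℝ,
        LinearMap.det (fderiv ℝ T z : (Fin (n+1) → ℝ) →ₗ[ℝ] (Fin (n+1) → ℝ)) =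
          Real.exp ((n + 1) * z (Fin.last n)) := by
  have hT' : ∀ z : Fin (n+1) → ℝ, ∀ i : Fin (n+1),
      T z i = if (i : ℕ) < n
        then Real.exp (z (Fin.last n)) * z i
        else Real.exp (z (Fin.last n)) * (1 - ∑ j : Fin n, z (Fin.castSucc j)) := by
    intro z i
    rw [hT z i]
    by_cases h : (i : ℕ) < n <;> simp [h]
  obtain ⟨h1, h2, h3⟩ := stmt8_main n hn T hT'
  refine ⟨h1, h2, h3, ?_⟩
  intro z
  rw [(stmt8_hasFDeriv n T hT' z).fderiv]
  have hco : (↑(stmt8D n z) : (Fin (n+1) → ℝ) →ₗ[ℝ] (Fin (n+1) → ℝ))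
      = Matrix.toLin' (Real.exp (z (Fin.last n)) • stmt8B n z) :=
    LinearMap.coe_toContinuousLinearMap _
  rw [hco, LinearMap.det_toLin', Matrix.det_smul, stmt8B_det, mul_one, Fintype.card_fin,
    ← Real.exp_nat_mul]
  congr 1
  push_cast
  ring
end

section
/- Let λ be a complex (signed, finite) measure on U_{n+1} = {y ∈ ℝ^{n+1} : Σ yᵢ > 0} with λ ≪ μ, where μ = (Σᵢ yᵢ)^{-(n+1)} λ_{ℝ^{n+1}} (i.e., μ has density (Σ yᵢ)^{-(n+1)} with respect to Lebesgue measure restricted to U_{n+1}); equivalently λ ≪ λ_{ℝ^{n+1}}|_{U_{n+1}}. Then the pushforward H∗λ under the homogeneous transform H(y) = y/(Σ yᵢ) is absolutely continuous with respect to the (n-dimensional Hausdorff / surface) measure μ_{P_n} on the hyperplane P_n = {y : Σ yᵢ = 1}. -/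
open MeasureTheory
open scoped ENNReal BigOperators

/-! Every `y` with `∑ yᵢ > 0` is `t • chart x` with `t = ∑ yᵢ` and `chart x = H y`. Hence
`H⁻¹(E) ∩ U` lies in the image under `(x, t) ↦ t • chart x` of `chart⁻¹(E) × ℝ`, which is
Lebesgue-null as soon as `μ_{P_n}(E) = 0`. That map is smooth, so it sends null sets to null sets,
and the hypothesis on `λ` gives `λ(H⁻¹ E) = 0`. -/

theorem volume_preimage_init_eq_zero {n : ℕ} {α : Type*} [MeasureSpace α]
    [SigmaFinite (volume : Measure α)] {N : Set (Fin n → α)} (hN : volume N = 0) :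
    volume (Fin.init ⁻¹' N : Set (Fin (n + 1) → α)) = 0 := by
  have hpre : (Fin.init ⁻¹' N : Set (Fin (n + 1) → α))
      = MeasurableEquiv.piFinSuccAbove (fun _ => α) (Fin.last n) ⁻¹' (Set.univ ×ˢ N) := by
    ext z
    simp
  rw [hpre, (volume_preserving_piFinSuccAbove (fun _ => α) (Fin.last n)).measure_preimage_equiv,
    Measure.volume_eq_prod, Measure.prod_prod, hN, mul_zero]

namespace HomogeneousTransform

variable {n : ℕ}

def affineChart (x : Fin n → ℝ) : Fin (n + 1) → ℝ := Fin.snoc x (1 - ∑ j, x j)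

noncomputable def normalize {ι : Type*} [Fintype ι] (y : ι → ℝ) : ι → ℝ := fun i => y i / ∑ j, y j

theorem measurable_affineChart : Measurable (affineChart (n := n)) := by
  refine measurable_pi_iff.2 fun i => Fin.lastCases ?_ (fun j => ?_) i
  · simp only [affineChart, Fin.snoc_last]
    fun_prop
  · simpa [affineChart] using measurable_pi_apply j

theorem differentiable_affineChart : Differentiable ℝ (affineChart (n := n)) := by
  refine differentiable_pi.2 fun i => Fin.lastCases ?_ (fun j => ?_) i
  · simpa [affineChart] using (differentiable_const 1).sub
      (Differentiable.fun_sum fun j _ => differentiable_apply j)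
  · simpa [affineChart] using differentiable_apply j

theorem affineChart_init {y : Fin (n + 1) → ℝ} (hy : ∑ i, y i = 1) :
    affineChart (Fin.init y) = y := by
  rw [Fin.sum_univ_castSucc] at hy
  refine funext fun i => Fin.lastCases ?_ (fun j => ?_) i
  · simp only [affineChart, Fin.init, Fin.snoc_last]
    linarith
  · simp [affineChart, Fin.init]

variable {ι : Type*} [Fintype ι]

theorem measurable_normalize : Measurable (normalize (ι := ι)) :=
  measurable_pi_iff.2 fun i =>
    (measurable_pi_apply i).div (Finset.measurable_sum _ fun j _ => measurable_pi_apply j)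

theorem sum_normalize {y : ι → ℝ} (hy : ∑ i, y i ≠ 0) : ∑ i, normalize y i = 1 := by
  simp only [normalize, ← Finset.sum_div, div_self hy]

theorem sum_smul_normalize {y : ι → ℝ} (hy : ∑ i, y i ≠ 0) : (∑ i, y i) • normalize y = y := by
  ext i
  simp [normalize, mul_div_cancel₀ _ hy]

/-- `(x, t)` is packed as `Fin.snoc x t`, so that `coneMap c (Fin.snoc x t) = t • c x`. -/
def coneMap (c : (Fin n → ℝ) → (Fin (n + 1) → ℝ)) (z : Fin (n + 1) → ℝ) : Fin (n + 1) → ℝ :=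
  z (Fin.last n) • c (Fin.init z)

theorem volume_coneMap_image_preimage_init_eq_zero {c : (Fin n → ℝ) → (Fin (n + 1) → ℝ)}
    (hc : Differentiable ℝ c) {N : Set (Fin n → ℝ)} (hN : volume N = 0) :
    volume (coneMap c '' (Fin.init ⁻¹' N)) = 0 := by
  have hinit : Differentiable ℝ (Fin.init : (Fin (n + 1) → ℝ) → Fin n → ℝ) :=
    differentiable_pi.2 fun i => differentiable_apply _
  exact addHaar_image_eq_zero_of_differentiableOn_of_addHaar_eq_zero _
    ((differentiable_apply _).smul (hc.comp hinit)).differentiableOn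
    (volume_preimage_init_eq_zero hN)

theorem preimage_normalize_inter_subset_coneMap_image (E : Set (Fin (n + 1) → ℝ)) :
    normalize ⁻¹' E ∩ {y | ∑ i, y i ≠ 0} ⊆
      coneMap affineChart '' (Fin.init ⁻¹' (affineChart ⁻¹' E)) := by
  rintro y ⟨hyE, hy⟩
  refine ⟨Fin.snoc (Fin.init (normalize y)) (∑ i, y i), ?_, ?_⟩
  · simpa [Fin.init_snoc, affineChart_init (sum_normalize hy)] using hyE
  · simp [coneMap, Fin.init_snoc, affineChart_init (sum_normalize hy), sum_smul_normalize hy]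

end HomogeneousTransform

open HomogeneousTransform

theorem stmt15_general (n : ℕ) :
    let H : (Fin (n+1) → ℝ) → (Fin (n+1) → ℝ) := fun y i => y i / ∑ j, y j
    let U : Set (Fin (n+1) → ℝ) := {y | 0 < ∑ i, y i}
    let chart : (Fin n → ℝ) → (Fin (n+1) → ℝ) :=
      fun x => Fin.snoc x (1 - ∑ j, x j)
    let μP : Measure (Fin (n+1) → ℝ) :=
      ((ENNReal.ofReal (Real.sqrt (n+1))) • (volume : Measure (Fin n → ℝ))).map chart
    ∀ lam : SignedMeasure (Fin (n+1) → ℝ),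
      (∀ E : Set (Fin (n+1) → ℝ), MeasurableSet E → volume (E ∩ U) = 0 → lam E = 0) →
      ∀ E : Set (Fin (n+1) → ℝ), MeasurableSet E → μP E = 0 → (lam.map H) E = 0 := by
  intro H U chart μP lam hlam E hE hμP
  have hchartE : volume (chart ⁻¹' E) = 0 := by
    have hle := Measure.le_map_apply measurable_affineChart.aemeasurable E
      (μ := ENNReal.ofReal (Real.sqrt (n+1)) • volume)
    rw [Measure.smul_apply, smul_eq_mul] at hle
    exact (mul_eq_zero.1 (nonpos_iff_eq_zero.1 (hle.trans hμP.le))).resolve_left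
      (ENNReal.ofReal_pos.2 (by positivity)).ne'
  have hH : Measurable H := measurable_normalize
  rw [VectorMeasure.map_apply lam hH hE]
  refine hlam _ (hH hE) (measure_mono_null ?_
    (volume_coneMap_image_preimage_init_eq_zero differentiable_affineChart hchartE))
  exact (Set.inter_subset_inter_right _ fun y hy => ne_of_gt hy).trans
    (preimage_normalize_inter_subset_coneMap_image E)

/-- If `lam` is a signed (finite) measure on `ℝ^{n+1}` absolutely continuous with respect to
Lebesgue measure restricted to the half-space `U_{n+1} = {y : Σ yᵢ > 0}` (equivalently
absolutely continuous w.r.t. `μ = (Σ yᵢ)^{-(n+1)}·λ` on `U_{n+1}`), then its pushforward by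
the homogeneous transform `H(y) = y/(Σ yᵢ)` is absolutely continuous with respect to the
surface measure `μ_{P_n}` on the hyperplane `P_n = {y : Σ yᵢ = 1}`, the pushforward of
`√(n+1)·λ_{ℝⁿ}` by the chart `x ↦ (x₁,…,xₙ, 1−Σxᵢ)`. -/
theorem stmt15 (n : ℕ) (hn : 1 ≤ n) :
    let H : (Fin (n+1) → ℝ) → (Fin (n+1) → ℝ) := fun y i => y i / ∑ j, y j
    let U : Set (Fin (n+1) → ℝ) := {y | 0 < ∑ i, y i}
    let chart : (Fin n → ℝ) → (Fin (n+1) → ℝ) :=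
      fun x => Fin.snoc x (1 - ∑ j, x j)
    let μP : Measure (Fin (n+1) → ℝ) :=
      ((ENNReal.ofReal (Real.sqrt (n+1))) • (volume : Measure (Fin n → ℝ))).map chart
    ∀ lam : SignedMeasure (Fin (n+1) → ℝ),
      (∀ E : Set (Fin (n+1) → ℝ), MeasurableSet E → volume (E ∩ U) = 0 → lam E = 0) →
      ∀ E : Set (Fin (n+1) → ℝ), MeasurableSet E → μP E = 0 → (lam.map H) E = 0 :=
  stmt15_general n
end

section
/- For n ≥ 1, let α = (α₁,…,α_{n+1}) and β = (β₁,…,β_{n+1}) with all αᵢ, βᵢ > 0, and let G_{α,β} be the product of Gamma distributions on (ℝ₊*)^{n+1}, with density f(y) = ∏ᵢ βᵢ^{αᵢ} yᵢ^{αᵢ−1} e^{−βᵢyᵢ}/Γ(αᵢ). Then the pushforward H∗G_{α,β} under the homogeneous transform H(y) = y/(Σᵢ yᵢ), read through the chart x ↦ (x₁,…,xₙ, 1−Σxᵢ) of the open simplex Bₙ, has density with respect to Lebesgue measure on Bₙ equal to (x₁,…,xₙ) ↦ [∏ᵢ₌₁ⁿ xᵢ^{αᵢ−1}]·(1−Σxᵢ)^{α_{n+1}−1}/B(α₁,…,α_{n+1})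 · (∏ᵢ βᵢ^{αᵢ}) / [β₁x₁ + ⋯ + βₙxₙ + β_{n+1}(1−Σxᵢ)]^{α₁+⋯+α_{n+1}}. In particular, when all βᵢ are equal, this is the Dirichlet distribution Dir(α₁,…,α_{n+1}). -/
/-!
Every `y` in the open positive orthant of `ℝ^{n+1}` is uniquely `u • chart x` with
`u = Σ yᵢ > 0` and `x` in the open simplex `Bₙ`, and this change of variables has Jacobian `uⁿ`.
Since `H (u • chart x) = chart x`, the pushforward of a density `f` on the orthant is the density
`x ↦ ∫₀^∞ uⁿ f (u • chart x) du` on `Bₙ`, read through the chart. For a product of Gamma densities,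
`uⁿ f (u • c)` is a constant times `u^{Σα - 1} e^{-u Σ βᵢcᵢ}`, so the `u`-integral is the Gamma
integral `Γ(Σα) / (Σ βᵢcᵢ)^{Σα}`.
-/

open MeasureTheory Set
open scoped ENNReal

section TriangularDet

variable {ι R : Type*} [Fintype ι] [DecidableEq ι] [LinearOrder ι] [CommRing R]

theorem LinearMap.det_eq_prod_of_isUpperTriangular (f : (ι → R) →ₗ[R] ι → R)
    (hf : ∀ i j, j < i → f (Pi.single j 1) i = 0) :
    f.det = ∏ i, f (Pi.single i 1) i := by
  rw [← LinearMap.det_toMatrix', Matrix.det_of_isUpperTriangular (M := LinearMap.toMatrix' f) hf]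
  simp

theorem LinearMap.det_eq_prod_of_isLowerTriangular (f : (ι → R) →ₗ[R] ι → R)
    (hf : ∀ i j, i < j → f (Pi.single j 1) i = 0) :
    f.det = ∏ i, f (Pi.single i 1) i := by
  rw [← LinearMap.det_toMatrix', Matrix.det_of_isLowerTriangular (LinearMap.toMatrix' f) hf]
  simp

end TriangularDet

section GammaIntegral

open Real

theorem lintegral_Ioi_rpow_mul_exp_neg_mul {a r : ℝ} (ha : 0 < a) (hr : 0 < r) :
    ∫⁻ u in Ioi 0, ENNReal.ofReal (u ^ (a - 1) * exp (-(r * u))) =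
      ENNReal.ofReal ((1 / r) ^ a * Gamma a) := by
  rw [← integral_rpow_mul_exp_neg_mul_Ioi ha hr, ofReal_integral_eq_lintegral_ofReal]
  · simpa [IntegrableOn] using
      integrableOn_rpow_mul_exp_neg_mul_rpow (by linarith : -1 < a - 1) zero_lt_one hr
  · filter_upwards [ae_restrict_mem measurableSet_Ioi] with u hu
    exact mul_nonneg (rpow_nonneg (le_of_lt hu) _) (exp_nonneg _)

theorem prod_gammaDensity_mul {ι : Type*} [Fintype ι] (α β c : ι → ℝ) {u : ℝ} (hu : 0 < u)
    (hc : ∀ i, 0 ≤ c i) :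
    ∏ i, β i ^ α i * (u * c i) ^ (α i - 1) * exp (-(β i * (u * c i))) / Gamma (α i) =
      (∏ i, β i ^ α i * c i ^ (α i - 1) / Gamma (α i)) *
        (u ^ (∑ i, (α i - 1)) * exp (-((∑ i, β i * c i) * u))) := by
  rw [rpow_sum_of_pos hu, Finset.sum_mul, ← Finset.sum_neg_distrib, exp_sum,
    ← Finset.prod_mul_distrib, ← Finset.prod_mul_distrib]
  refine Finset.prod_congr rfl fun i _ => ?_
  rw [mul_rpow hu.le (hc i), show β i * (u * c i) = β i * c i * u by ring]
  ring

theorem lintegral_Ioi_pow_mul_prod_gammaDensity {n : ℕ} (α β c : Fin (n + 1) → ℝ)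
    (hα : ∀ i, 0 < α i) (hβ : ∀ i, 0 < β i) (hc : ∀ i, 0 < c i) :
    ∫⁻ u in Ioi 0, ENNReal.ofReal (u ^ n) * ENNReal.ofReal
        (∏ i, β i ^ α i * (u * c i) ^ (α i - 1) * exp (-(β i * (u * c i))) / Gamma (α i)) =
      ENNReal.ofReal ((∏ i, c i ^ (α i - 1)) / ((∏ i, Gamma (α i)) / Gamma (∑ i, α i)) *
        (∏ i, β i ^ α i) / (∑ i, β i * c i) ^ (∑ i, α i)) := by
  set A := ∑ i, α i
  set R := ∑ i, β i * c i with hR_def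
  set C := ∏ i, β i ^ α i * c i ^ (α i - 1) / Gamma (α i) with hC_def
  have hA : 0 < A := Finset.sum_pos (fun i _ => hα i) Finset.univ_nonempty
  have hR : 0 < R := Finset.sum_pos (fun i _ => mul_pos (hβ i) (hc i)) Finset.univ_nonempty
  have hC : 0 ≤ C := Finset.prod_nonneg fun i _ => div_nonneg
    (mul_nonneg (rpow_nonneg (hβ i).le _) (rpow_nonneg (hc i).le _)) (Gamma_pos_of_pos (hα i)).le
  have hsum : ∑ i, (α i - 1) = A - (n + 1) := by simp [A, Finset.sum_sub_distrib]
  have hpow : ∀ u : ℝ, 0 < u → u ^ n * u ^ (∑ i, (α i - 1)) = u ^ (A - 1) := fun u hu => by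
    rw [hsum, ← rpow_natCast, ← rpow_add hu]
    congr 1
    ring
  calc _ = ∫⁻ u in Ioi 0, ENNReal.ofReal C * ENNReal.ofReal (u ^ (A - 1) * exp (-(R * u))) := by
        refine setLIntegral_congr_fun measurableSet_Ioi fun u (hu : 0 < u) => ?_
        rw [← ENNReal.ofReal_mul (pow_nonneg hu.le n), ← ENNReal.ofReal_mul hC,
          prod_gammaDensity_mul α β c hu fun i => (hc i).le, ← hC_def, ← hR_def, ← hpow u hu]
        congr 1
        ring
    _ = ENNReal.ofReal C * ENNReal.ofReal ((1 / R) ^ A * Gamma A) := by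
        rw [lintegral_const_mul' _ _ ENNReal.ofReal_ne_top,
          lintegral_Ioi_rpow_mul_exp_neg_mul hA hR]
    _ = _ := by
        rw [← ENNReal.ofReal_mul hC, hC_def, Finset.prod_div_distrib, Finset.prod_mul_distrib,
          one_div, inv_rpow hR.le]
        have := (Gamma_pos_of_pos hA).ne'
        have := (Finset.prod_pos (s := Finset.univ) fun i _ => Gamma_pos_of_pos (hα i)).ne'
        have := (rpow_pos_of_pos hR A).ne'
        field_simp

end GammaIntegral

section SimplexCoordinates

open Fin

variable {n : ℕ}

noncomputable def simplexChart (x : Fin n → ℝ) : Fin (n + 1) → ℝ := snoc x (1 - ∑ j, x j)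

def openSimplex (n : ℕ) : Set (Fin n → ℝ) := {x | (∀ i, x i ∈ Ioo (0 : ℝ) 1) ∧ ∑ i, x i < 1}

theorem sum_simplexChart (x : Fin n → ℝ) : ∑ i, simplexChart x i = 1 := by
  simp [simplexChart, sum_univ_castSucc]

theorem prod_simplexChart_rpow (x : Fin n → ℝ) (a : Fin (n + 1) → ℝ) :
    ∏ i, simplexChart x i ^ a i = (∏ k, x k ^ a k.castSucc) * (1 - ∑ k, x k) ^ a (last n) := by
  simp [simplexChart, prod_univ_castSucc]

theorem forall_simplexChart_pos_iff (x : Fin n → ℝ) :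
    (∀ i, 0 < simplexChart x i) ↔ x ∈ openSimplex n := by
  simp only [forall_fin_succ', simplexChart, snoc_castSucc, snoc_last, openSimplex, mem_ofPred_eq,
    mem_Ioo, sub_pos, forall_and]
  refine ⟨fun ⟨hpos, hsum⟩ => ⟨⟨hpos, fun i => ?_⟩, hsum⟩, fun ⟨⟨hpos, _⟩, hsum⟩ => ⟨hpos, hsum⟩⟩
  exact (Finset.single_le_sum (fun j _ => (hpos j).le) (Finset.mem_univ i)).trans_lt hsum

theorem measurable_simplexChart : Measurable (simplexChart (n := n)) := by
  refine measurable_pi_lambda _ fun i => ?_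
  induction i using lastCases with
  | last => simp only [simplexChart, snoc_last]; fun_prop
  | cast k => simp only [simplexChart, snoc_castSucc]; fun_prop

theorem measurableSet_openSimplex : MeasurableSet (openSimplex n) := by
  simp only [openSimplex, mem_Ioo, ofPred_and, ofPred_forall]
  refine .inter (.iInter fun i => .inter ?_ ?_) ?_ <;>
    exact measurableSet_lt (by fun_prop) (by fun_prop)

noncomputable def simplexCone (z : Fin (n + 1) → ℝ) : Fin (n + 1) → ℝ :=
  z (last n) • simplexChart (init z)

theorem sum_simplexCone (z : Fin (n + 1) → ℝ) : ∑ i, simplexCone z i = z (last n) := by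
  simp [simplexCone, ← Finset.mul_sum, sum_simplexChart]

theorem init_simplexCone (z : Fin (n + 1) → ℝ) : init (simplexCone z) = z (last n) • init z := by
  ext k; simp [simplexCone, simplexChart, init]

theorem injOn_simplexCone : InjOn (simplexCone (n := n)) {z | z (last n) ≠ 0} := by
  intro z hz z' _ h
  have hlast : z (last n) = z' (last n) := by rw [← sum_simplexCone z, h, sum_simplexCone]
  have hinit : init z = init z' := by
    have h' := congrArg init h
    rw [init_simplexCone, init_simplexCone, hlast] at h'
    exact smul_right_injective _ (hlast ▸ hz) h'
  rw [← snoc_init_self z, ← snoc_init_self z', hinit, hlast]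

theorem image_simplexCone :
    simplexCone '' {z | 0 < z (last n) ∧ init z ∈ openSimplex n} = {y | ∀ i, 0 < y i} := by
  ext y
  constructor
  · rintro ⟨z, ⟨hz, hx⟩, rfl⟩ i
    exact mul_pos hz ((forall_simplexChart_pos_iff _).2 hx i)
  · intro hy
    set u := ∑ i, y i
    have hu : 0 < u := Finset.sum_pos (fun i _ => hy i) Finset.univ_nonempty
    have hchart : simplexChart (u⁻¹ • init y) = u⁻¹ • y := by
      ext i
      induction i using lastCases with
      | last =>
        have hsum : ∑ k : Fin n, y k.castSucc = u - y (last n) := by simp [u, sum_univ_castSucc]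
        simp [simplexChart, init, ← Finset.mul_sum, hsum]
        field_simp
        ring
      | cast k => simp [simplexChart, init]
    refine ⟨snoc (u⁻¹ • init y) u, ⟨by simpa using hu, ?_⟩, ?_⟩
    · rw [init_snoc, ← forall_simplexChart_pos_iff, hchart]
      exact fun i => mul_pos (inv_pos.2 hu) (hy i)
    · rw [simplexCone, snoc_last, init_snoc, hchart, smul_inv_smul₀ hu.ne']

namespace simplexCone

/- The Jacobian of `simplexCone = shear ∘ scale` is computed factorwise: `scale` has an
upper-triangular Jacobian with diagonal `(z_n, …, z_n, 1)`, and the linear map `shear` is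
lower-triangular with unit diagonal. -/

noncomputable def shear : (Fin (n + 1) → ℝ) →ₗ[ℝ] Fin (n + 1) → ℝ where
  toFun v := snoc (init v) (v (last n) - ∑ k, init v k)
  map_add' v w := by
    ext i
    induction i using lastCases <;> simp [init, Finset.sum_add_distrib]
    ring
  map_smul' c v := by
    ext i
    induction i using lastCases <;> simp [init, ← Finset.mul_sum]
    ring

noncomputable def scale (z : Fin (n + 1) → ℝ) : Fin (n + 1) → ℝ :=
  snoc (z (last n) • init z) (z (last n))

noncomputable def scaleDeriv (z : Fin (n + 1) → ℝ) : (Fin (n + 1) → ℝ) →ₗ[ℝ] Fin (n + 1) → ℝ where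
  toFun v := snoc (z (last n) • init v + v (last n) • init z) (v (last n))
  map_add' v w := by
    ext i
    induction i using lastCases <;> simp [init]
    ring
  map_smul' c v := by
    ext i
    induction i using lastCases <;> simp [init]
    ring

theorem shear_scale (z : Fin (n + 1) → ℝ) : shear (scale z) = simplexCone z := by
  ext i
  induction i using lastCases <;>
    simp [shear, scale, simplexCone, simplexChart, init, ← Finset.mul_sum, mul_sub]

theorem det_shear : (shear (n := n)).det = 1 := by
  rw [LinearMap.det_eq_prod_of_isLowerTriangular]
  · simp [shear, prod_univ_castSucc, init, Pi.single_apply]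
  · intro i j hij
    induction i using lastCases with
    | last => exact absurd hij (not_lt.2 (le_last j))
    | cast k => simp [shear, init, Pi.single_apply, hij.ne']

theorem det_scaleDeriv (z : Fin (n + 1) → ℝ) : (scaleDeriv z).det = z (last n) ^ n := by
  rw [LinearMap.det_eq_prod_of_isUpperTriangular]
  · simp [scaleDeriv, prod_univ_castSucc, init]
  · intro i j hji
    have hj : j ≠ last n := (hji.trans_le (le_last i)).ne
    induction i using lastCases with
    | last => simp [scaleDeriv, hj]
    | cast k => simp [scaleDeriv, init, hj, hji.ne]

theorem hasFDerivAt_scale (z : Fin (n + 1) → ℝ) :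
    HasFDerivAt scale (scaleDeriv z).toContinuousLinearMap z := by
  refine hasFDerivAt_pi'' fun i => ?_
  induction i using lastCases with
  | last =>
    have h : (fun x => scale x (last n)) = fun x => x (last n) := by funext x; simp [scale]
    rw [h]
    exact (hasFDerivAt_apply (last n) z).congr_fderiv (by ext; simp [scaleDeriv])
  | cast k =>
    have h : (fun x => scale x k.castSucc) = fun x => x (last n) * x k.castSucc := by
      funext x; simp [scale, init]
    rw [h]
    exact ((hasFDerivAt_apply (last n) z).mul (hasFDerivAt_apply k.castSucc z)).congr_fderiv
      (by ext; simp [scaleDeriv, init]; ring)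

end simplexCone

open simplexCone in
theorem hasFDerivAt_simplexCone (z : Fin (n + 1) → ℝ) :
    HasFDerivAt simplexCone (shear ∘ₗ scaleDeriv z).toContinuousLinearMap z := by
  have h : simplexCone (n := n) = shear.toContinuousLinearMap ∘ scale :=
    funext fun z => (shear_scale z).symm
  rw [h]
  exact shear.toContinuousLinearMap.hasFDerivAt.comp z (hasFDerivAt_scale z)

open simplexCone in
theorem det_fderiv_simplexCone (z : Fin (n + 1) → ℝ) :
    (shear ∘ₗ scaleDeriv z).toContinuousLinearMap.det = z (last n) ^ n := by
  rw [ContinuousLinearMap.det, LinearMap.coe_toContinuousLinearMap, LinearMap.det_comp, det_shear,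
    det_scaleDeriv, one_mul]

open simplexCone in
theorem setLIntegral_pos_eq_lintegral_openSimplex_lintegral_Ioi
    {F : (Fin (n + 1) → ℝ) → ℝ≥0∞} (hF : Measurable F) :
    ∫⁻ y in {y | ∀ i, 0 < y i}, F y =
      ∫⁻ x in openSimplex n, ∫⁻ u in Ioi 0, ENNReal.ofReal (u ^ n) * F (u • simplexChart x) := by
  let e := MeasurableEquiv.piFinSuccAbove (fun _ : Fin (n + 1) => ℝ) (last n)
  have he : ∀ z, e z = (z (last n), init z) := fun z => by
    ext k <;> simp [e, MeasurableEquiv.piFinSuccAbove, init]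
  let S := e ⁻¹' (Ioi 0 ×ˢ openSimplex n)
  have hS : S = {z : Fin (n + 1) → ℝ | 0 < z (last n) ∧ init z ∈ openSimplex n} := by
    ext z; simp [S, he]
  have hSm : MeasurableSet S := e.measurable (measurableSet_Ioi.prod measurableSet_openSimplex)
  let G : ℝ × (Fin n → ℝ) → ℝ≥0∞ := fun p => ENNReal.ofReal (p.1 ^ n) * F (p.1 • simplexChart p.2)
  have hG : Measurable G := (measurable_fst.pow_const n).ennreal_ofReal.mul
    (hF.comp (measurable_fst.smul (measurable_simplexChart.comp measurable_snd)))
  calc ∫⁻ y in {y | ∀ i, 0 < y i}, F y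
      = ∫⁻ z in S, ENNReal.ofReal |(shear ∘ₗ scaleDeriv z).toContinuousLinearMap.det| *
          F (simplexCone z) := by
        rw [← image_simplexCone, ← hS]
        exact lintegral_image_eq_lintegral_abs_det_fderiv_mul volume hSm
          (fun z _ => (hasFDerivAt_simplexCone z).hasFDerivWithinAt)
          (injOn_simplexCone.mono fun z hz => (hS ▸ hz).1.ne') F
    _ = ∫⁻ z in S, G (e z) := by
        refine setLIntegral_congr_fun hSm fun z hz => ?_
        rw [det_fderiv_simplexCone, abs_of_nonneg (pow_nonneg (hS ▸ hz).1.le n), he]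
        rfl
    _ = ∫⁻ p in Ioi 0 ×ˢ openSimplex n, G p ∂(volume.prod volume) :=
        (volume_preserving_piFinSuccAbove _ _).setLIntegral_comp_preimage_emb
          e.measurableEmbedding G _
    _ = _ := by rw [← Measure.prod_restrict, lintegral_prod_symm _ hG.aemeasurable]

theorem map_div_sum_withDensity {F : (Fin (n + 1) → ℝ) → ℝ≥0∞} (hF : Measurable F) :
    ((volume.restrict {y | ∀ i, 0 < y i}).withDensity F).map (fun y i => y i / ∑ j, y j) =
      ((volume.restrict (openSimplex n)).withDensity
        fun x => ∫⁻ u in Ioi 0, ENNReal.ofReal (u ^ n) * F (u • simplexChart x)).map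
        simplexChart := by
  have hH : Measurable fun (y : Fin (n + 1) → ℝ) i => y i / ∑ j, y j := by fun_prop
  have hHchart : ∀ x : Fin n → ℝ, ∀ u : ℝ, u ≠ 0 →
      (fun i => (u • simplexChart x) i / ∑ j, (u • simplexChart x) j) = simplexChart x := by
    intro x u hu
    ext i
    simp [← Finset.mul_sum, sum_simplexChart, hu]
  ext s hs
  rw [Measure.map_apply hH hs, Measure.map_apply measurable_simplexChart hs,
    withDensity_apply _ (hH hs), withDensity_apply _ (measurable_simplexChart hs),
    ← lintegral_indicator (hH hs), ← lintegral_indicator (measurable_simplexChart hs),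
    setLIntegral_pos_eq_lintegral_openSimplex_lintegral_Ioi (hF.indicator (hH hs))]
  refine setLIntegral_congr_fun measurableSet_openSimplex fun x _ => ?_
  by_cases hxs : simplexChart x ∈ s
  · rw [indicator_of_mem (show x ∈ simplexChart ⁻¹' s from hxs)]
    refine setLIntegral_congr_fun measurableSet_Ioi fun u (hu : 0 < u) => ?_
    rw [indicator_of_mem (by rw [mem_preimage, hHchart x u hu.ne']; exact hxs)]
  · rw [indicator_of_notMem (show x ∉ simplexChart ⁻¹' s from hxs), ← lintegral_zero]
    refine setLIntegral_congr_fun measurableSet_Ioi fun u (hu : 0 < u) => ?_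
    rw [indicator_of_notMem (by rw [mem_preimage, hHchart x u hu.ne']; exact hxs), mul_zero]

end SimplexCoordinates

theorem stmt18_general (n : ℕ) (α β : Fin (n+1) → ℝ)
    (hα : ∀ i, 0 < α i) (hβ : ∀ i, 0 < β i) :
    let H : (Fin (n+1) → ℝ) → (Fin (n+1) → ℝ) := fun y i => y i / ∑ j, y j
    let Pos : Set (Fin (n+1) → ℝ) := {y | ∀ i, 0 < y i}
    let f : (Fin (n+1) → ℝ) → ℝ := fun y =>
      ∏ i, β i ^ α i * y i ^ (α i - 1) * Real.exp (-(β i * y i)) / Real.Gamma (α i)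
    let G : Measure (Fin (n+1) → ℝ) :=
      (volume.restrict Pos).withDensity (fun y => ENNReal.ofReal (f y))
    let B : Set (Fin n → ℝ) := {x | (∀ i, x i ∈ Set.Ioo (0:ℝ) 1) ∧ ∑ i, x i < 1}
    let chart : (Fin n → ℝ) → (Fin (n+1) → ℝ) := fun x => Fin.snoc x (1 - ∑ j, x j)
    let Bα : ℝ := (∏ i, Real.Gamma (α i)) / Real.Gamma (∑ i, α i)
    let g : (Fin n → ℝ) → ℝ := fun x =>
      (∏ i : Fin n, x i ^ (α (Fin.castSucc i) - 1)) *
        (1 - ∑ i, x i) ^ (α (Fin.last n) - 1) / Bα *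
        (∏ i, β i ^ α i) / (∑ i, β i * chart x i) ^ (∑ i, α i)
    G.map H = ((volume.restrict B).withDensity (fun x => ENNReal.ofReal (g x))).map chart := by
  intro H Pos f G B chart Bα g
  have hf : Measurable f := by fun_prop
  refine (map_div_sum_withDensity hf.ennreal_ofReal).trans (congrArg (Measure.map chart) ?_)
  refine withDensity_congr_ae ((ae_restrict_iff' measurableSet_openSimplex).2
    (ae_of_all _ fun x hx => ?_))
  simp only [f, Pi.smul_apply, smul_eq_mul]
  rw [lintegral_Ioi_pow_mul_prod_gammaDensity α β _ hα hβ ((forall_simplexChart_pos_iff x).2 hx),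
    prod_simplexChart_rpow]
  rfl

/-- Homogeneous transform of a product of Gamma distributions: for `αᵢ, βᵢ > 0`, the
pushforward under `H(y) = y/(Σ yᵢ)` of the measure on `(ℝ₊*)^{n+1}` with density
`∏ᵢ βᵢ^{αᵢ} yᵢ^{αᵢ−1} e^{−βᵢyᵢ}/Γ(αᵢ)`, read through the chart
`x ↦ (x₁,…,xₙ,1−Σxᵢ)` of the open simplex `Bₙ`, has density w.r.t. Lebesgue measure
on `Bₙ` equal to
`x ↦ [∏ xᵢ^{αᵢ−1}](1−Σxᵢ)^{α_{n+1}−1}/B(α) · (∏βᵢ^{αᵢ})/(Σᵢ βᵢ·(chart x)ᵢ)^{Σα}`,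
where `B(α) = ∏Γ(αᵢ)/Γ(Σαᵢ)`. -/
theorem stmt18 (n : ℕ) (hn : 1 ≤ n) (α β : Fin (n+1) → ℝ)
    (hα : ∀ i, 0 < α i) (hβ : ∀ i, 0 < β i) :
    let H : (Fin (n+1) → ℝ) → (Fin (n+1) → ℝ) := fun y i => y i / ∑ j, y j
    let Pos : Set (Fin (n+1) → ℝ) := {y | ∀ i, 0 < y i}
    let f : (Fin (n+1) → ℝ) → ℝ := fun y =>
      ∏ i, β i ^ α i * y i ^ (α i - 1) * Real.exp (-(β i * y i)) / Real.Gamma (α i)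
    let G : Measure (Fin (n+1) → ℝ) :=
      (volume.restrict Pos).withDensity (fun y => ENNReal.ofReal (f y))
    let B : Set (Fin n → ℝ) := {x | (∀ i, x i ∈ Set.Ioo (0:ℝ) 1) ∧ ∑ i, x i < 1}
    let chart : (Fin n → ℝ) → (Fin (n+1) → ℝ) := fun x => Fin.snoc x (1 - ∑ j, x j)
    let Bα : ℝ := (∏ i, Real.Gamma (α i)) / Real.Gamma (∑ i, α i)
    let g : (Fin n → ℝ) → ℝ := fun x =>
      (∏ i : Fin n, x i ^ (α (Fin.castSucc i) - 1)) *
        (1 - ∑ i, x i) ^ (α (Fin.last n) - 1) / Bα *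
        (∏ i, β i ^ α i) / (∑ i, β i * chart x i) ^ (∑ i, α i)
    G.map H = ((volume.restrict B).withDensity (fun x => ENNReal.ofReal (g x))).map chart :=
  stmt18_general n α β hα hβ
end
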